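/- arXiv:1508.05574 — 5 statements merged into one kernel-verified Lean document; each statement's English description precedes it below -/
import Mathlib

section
/- Let λ be a nonnegative finitely additive set function on a ring A of subsets of Ω, with outer measure λ*(E) = inf{λ(A) : A ∈ A, E ⊆ A} (with inf ∅ = ∞) and inner measure λ_*(E) = sup{λ(B) : B ∈ A, B ⊆ E}. If A, B ⊆ Ω and f is λ-integrable with 1_A ≤ f ≤ 1_B pointwise, then λ*(A) ≤ ∫ f dλ ≤ λ_*(B). -/
open scoped ENNReal
open MeasureTheory Filter

namespace FA

variable {Ω : Type*}

/-- Outer measure induced by a finitely additive set function on a ring. -/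
noncomputable def outer (𝒜 : Set (Set Ω)) (l : Set Ω → ℝ) (E : Set Ω) : ℝ≥0∞ :=
  ⨅ (A : Set Ω) (_ : A ∈ 𝒜) (_ : E ⊆ A), ENNReal.ofReal (l A)

/-- Inner measure induced by a finitely additive set function on a ring. -/
noncomputable def inner (𝒜 : Set (Set Ω)) (l : Set Ω → ℝ) (E : Set Ω) : ℝ≥0∞ :=
  ⨆ (B : Set Ω) (_ : B ∈ 𝒜) (_ : B ⊆ E), ENNReal.ofReal (l B)

/-- `f` is an `𝒜`-simple function. -/
def IsSimple (𝒜 : Set (Set Ω)) (f : Ω → ℝ) : Prop :=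
  ∃ (s : Finset (Set Ω)) (c : Set Ω → ℝ), (∀ A ∈ s, A ∈ 𝒜) ∧
    ∀ ω, f ω = ∑ A ∈ s, c A * (A.indicator (fun _ => (1 : ℝ)) ω)

/-- `I` is the elementary integral of the `𝒜`-simple function `f` with respect to `l`. -/
def SimpleIntegralEq (𝒜 : Set (Set Ω)) (l : Set Ω → ℝ) (f : Ω → ℝ) (I : ℝ) : Prop :=
  ∃ (s : Finset (Set Ω)) (c : Set Ω → ℝ), (∀ A ∈ s, A ∈ 𝒜) ∧
    (∀ ω, f ω = ∑ A ∈ s, c A * (A.indicator (fun _ => (1 : ℝ)) ω)) ∧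
    I = ∑ A ∈ s, c A * l A

/-- `f n` converges to `g` in `l`-measure. -/
def ConvInMeasure (𝒜 : Set (Set Ω)) (l : Set Ω → ℝ) (f : ℕ → Ω → ℝ) (g : Ω → ℝ) : Prop :=
  ∀ c : ℝ, 0 < c →
    Tendsto (fun n => outer 𝒜 l {ω | c < |f n ω - g ω|}) atTop (nhds 0)

/-- The sequence `f` is Cauchy in the `L¹(l)` seminorm. -/
def CauchyL1 (𝒜 : Set (Set Ω)) (l : Set Ω → ℝ) (f : ℕ → Ω → ℝ) : Prop :=
  ∀ ε : ℝ, 0 < ε → ∃ N : ℕ, ∀ m ≥ N, ∀ n ≥ N,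
    ∃ I : ℝ, SimpleIntegralEq 𝒜 l (fun ω => |f m ω - f n ω|) I ∧ I < ε

/-- `f` is integrable in the finitely additive (Dunford–Schwartz) sense with integral `I`. -/
def HasIntegral (𝒜 : Set (Set Ω)) (l : Set Ω → ℝ) (f : Ω → ℝ) (I : ℝ) : Prop :=
  ∃ (g : ℕ → Ω → ℝ) (J : ℕ → ℝ), (∀ n, IsSimple 𝒜 (g n)) ∧
    ConvInMeasure 𝒜 l g f ∧ CauchyL1 𝒜 l g ∧
    (∀ n, SimpleIntegralEq 𝒜 l (g n) (J n)) ∧ Tendsto J atTop (nhds I)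

/-- `f ∈ L¹(l)`. -/
def MemL1 (𝒜 : Set (Set Ω)) (l : Set Ω → ℝ) (f : Ω → ℝ) : Prop :=
  ∃ I : ℝ, HasIntegral 𝒜 l f I

/-- `f` is `l`-measurable: an `l`-limit in measure of `𝒜`-simple functions. -/
def FAMeasurable (𝒜 : Set (Set Ω)) (l : Set Ω → ℝ) (f : Ω → ℝ) : Prop :=
  ∃ g : ℕ → Ω → ℝ, (∀ n, IsSimple 𝒜 (g n)) ∧ ConvInMeasure 𝒜 l g f

/-- `(𝒜, l)` is a finitely additive measure structure on `Ω`. -/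
def FAMeasure (𝒜 : Set (Set Ω)) (l : Set Ω → ℝ) : Prop :=
  MeasureTheory.IsSetRing 𝒜 ∧ (∀ A ∈ 𝒜, 0 ≤ l A) ∧ l ∅ = 0 ∧
    ∀ A ∈ 𝒜, ∀ B ∈ 𝒜, Disjoint A B → l (A ∪ B) = l A + l B

/-- The ring `𝒜(l)` of sets whose inner and outer measures agree and are finite. -/
def AgreeRing (𝒜 : Set (Set Ω)) (l : Set Ω → ℝ) : Set (Set Ω) :=
  {E : Set Ω | outer 𝒜 l E = inner 𝒜 l E ∧ outer 𝒜 l E < ⊤}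

end FA

open FA MeasureTheory

/-!
For an `L¹`-Cauchy sequence of simple functions the truncations `min |g n| ε` have uniformly small
integrals, since one fixed `g m` vanishes off a set of finite measure; together with a bound on
`g m`, this makes `∫ |g n| → 0` whenever `g n → 0` in measure. Applied to the `1`-Lipschitz images
`(g n)⁻` and `(g n - 1)⁺`, which tend in measure to `f⁻ = 0` and `(f - 1)⁺ = 0`, it shows that the
approximants of `f` take values essentially in `[0, 1]`. Then `A` is covered, up to a set of small
outer measure, by `{g n > 1 - 2η}`, whose measure is at most about `∫ g n → I`; and `{g n > ε}`,
less a small set, lies in `B` and carries all of `∫ g n` but a small truncation.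
-/

namespace FA

open scoped Topology

variable {Ω : Type*} {𝒜 : Set (Set Ω)} {l : Set Ω → ℝ}

local notation "𝟙" => fun _ => (1 : ℝ)

section Atoms

def atom (s T : Finset (Set Ω)) : Set Ω := {ω | ∀ A ∈ s, ω ∈ A ↔ A ∈ T}

open scoped Classical in
theorem mem_atom_filter (s : Finset (Set Ω)) (ω : Ω) : ω ∈ atom s (s.filter (ω ∈ ·)) := by
  simp +contextual [atom]

theorem eq_of_mem_atom {s T T' : Finset (Set Ω)} (hT : T ⊆ s) (hT' : T' ⊆ s) {ω : Ω}
    (h : ω ∈ atom s T) (h' : ω ∈ atom s T') : T = T' := by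
  ext A
  by_cases hA : A ∈ s
  · exact (h A hA).symm.trans (h' A hA)
  · exact iff_of_false (fun hAT => hA (hT hAT)) (fun hAT => hA (hT' hAT))

theorem atom_mem (h𝒜 : IsSetRing 𝒜) {s T : Finset (Set Ω)} (hs : ∀ A ∈ s, A ∈ 𝒜) (hT : T ⊆ s)
    (hne : T.Nonempty) : atom s T ∈ 𝒜 := by
  classical
  have : atom s T = (⋂ A ∈ T, A) \ ⋃ A ∈ s \ T, A := by
    ext ω
    simp only [atom, Set.mem_ofPred_eq, Set.mem_sdiff, Set.mem_iInter, Set.mem_iUnion,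
      Finset.mem_sdiff, not_exists]
    exact ⟨fun h => ⟨fun A hA => (h A (hT hA)).2 hA, fun A hA hωA => hA.2 ((h A hA.1).1 hωA)⟩,
      fun h A hA => ⟨fun hωA => by_contra fun hAT => h.2 A ⟨hA, hAT⟩ hωA, h.1 A⟩⟩
  rw [this]
  exact h𝒜.sdiff_mem (h𝒜.biInter_mem T hne fun A hA => hs A (hT hA))
    (h𝒜.biUnion_mem _ fun A hA => hs A (Finset.mem_sdiff.1 hA).1)

theorem sum_mul_indicator_of_mem_atom {s T : Finset (Set Ω)} (hT : T ⊆ s) (c : Set Ω → ℝ)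
    {ω : Ω} (hω : ω ∈ atom s T) :
    ∑ A ∈ s, c A * A.indicator 𝟙 ω = ∑ A ∈ T, c A := by
  classical
  calc ∑ A ∈ s, c A * A.indicator 𝟙 ω = ∑ A ∈ s, if A ∈ T then c A else 0 := by
        refine Finset.sum_congr rfl fun A hA => ?_
        by_cases hωA : ω ∈ A
        · simp [hωA, (hω A hA).1 hωA]
        · simp [hωA, mt (hω A hA).2 hωA]
    _ = ∑ A ∈ T, c A := by rw [Finset.sum_ite_mem, Finset.inter_eq_right.2 hT]

open scoped Classical in
theorem FAMeasure.eq_sum_atom (hl : FAMeasure 𝒜 l) {s : Finset (Set Ω)} (hs : ∀ A ∈ s, A ∈ 𝒜)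
    {A : Set Ω} (hA : A ∈ s) :
    l A = ∑ T ∈ s.powerset.filter (A ∈ ·), l (atom s T) := by
  have hcover : A = ⋃ T ∈ s.powerset.filter (A ∈ ·), atom s T := by
    ext ω
    simp only [Set.mem_iUnion, Finset.mem_filter, Finset.mem_powerset, exists_prop]
    exact ⟨fun hω => ⟨_, ⟨Finset.filter_subset _ _, Finset.mem_filter.2 ⟨hA, hω⟩⟩,
      mem_atom_filter s ω⟩, fun ⟨T, ⟨_, hAT⟩, hω⟩ => (hω A hA).2 hAT⟩
  let m : AddContent ℝ 𝒜 := hl.1.addContent_of_union l hl.2.2.1 fun hs ht h => hl.2.2.2 _ hs _ ht h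
  conv_lhs => rw [hcover]
  refine addContent_biUnion_eq (m := m) hl.1 (fun T hT => ?_) fun T hT T' hT' hne => ?_
  · obtain ⟨hTs, hAT⟩ := Finset.mem_filter.1 hT
    exact atom_mem hl.1 hs (Finset.mem_powerset.1 hTs) ⟨A, hAT⟩
  · exact Set.disjoint_left.2 fun ω h h' => hne <| eq_of_mem_atom
      (Finset.mem_powerset.1 (Finset.mem_filter.1 hT).1)
      (Finset.mem_powerset.1 (Finset.mem_filter.1 hT').1) h h'

theorem FAMeasure.sum_mul_eq_sum_atom (hl : FAMeasure 𝒜 l) {s : Finset (Set Ω)}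
    (hs : ∀ A ∈ s, A ∈ 𝒜) (c : Set Ω → ℝ) :
    ∑ A ∈ s, c A * l A = ∑ T ∈ s.powerset, (∑ A ∈ T, c A) * l (atom s T) := by
  classical
  calc ∑ A ∈ s, c A * l A
      = ∑ A ∈ s, ∑ T ∈ s.powerset, if A ∈ T then c A * l (atom s T) else 0 := by
        refine Finset.sum_congr rfl fun A hA => ?_
        rw [hl.eq_sum_atom hs hA, Finset.mul_sum, Finset.sum_filter]
    _ = ∑ T ∈ s.powerset, ∑ A ∈ s, if A ∈ T then c A * l (atom s T) else 0 := Finset.sum_comm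
    _ = ∑ T ∈ s.powerset, (∑ A ∈ T, c A) * l (atom s T) := by
        refine Finset.sum_congr rfl fun T hT => ?_
        rw [Finset.sum_ite_mem, Finset.inter_eq_right.2 (Finset.mem_powerset.1 hT),
          Finset.sum_mul]

end Atoms

section SimpleIntegral

variable {u v : Ω → ℝ} {I J : ℝ}

theorem SimpleIntegralEq.isSimple (h : SimpleIntegralEq 𝒜 l u I) : IsSimple 𝒜 u :=
  let ⟨s, c, hs, hu, _⟩ := h
  ⟨s, c, hs, hu⟩

theorem IsSimple.exists_simpleIntegralEq (h : IsSimple 𝒜 u) (l : Set Ω → ℝ) :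
    ∃ I, SimpleIntegralEq 𝒜 l u I :=
  let ⟨s, c, hs, hu⟩ := h
  ⟨_, s, c, hs, hu, rfl⟩

theorem simpleIntegralEq_zero : SimpleIntegralEq 𝒜 l (fun _ => 0) 0 :=
  ⟨∅, 0, by simp, by simp, by simp⟩

theorem simpleIntegralEq_indicator {E : Set Ω} (hE : E ∈ 𝒜) :
    SimpleIntegralEq 𝒜 l (E.indicator 𝟙) (l E) :=
  ⟨{E}, 𝟙, by simpa using hE, by simp, by simp⟩

theorem SimpleIntegralEq.const_mul (h : SimpleIntegralEq 𝒜 l u I) (r : ℝ) :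
    SimpleIntegralEq 𝒜 l (fun ω => r * u ω) (r * I) := by
  obtain ⟨s, c, hs, hu, rfl⟩ := h
  exact ⟨s, fun A => r * c A, hs, fun ω => by simp [hu, Finset.mul_sum, mul_assoc],
    by simp [Finset.mul_sum, mul_assoc]⟩

theorem SimpleIntegralEq.add (hu : SimpleIntegralEq 𝒜 l u I) (hv : SimpleIntegralEq 𝒜 l v J) :
    SimpleIntegralEq 𝒜 l (fun ω => u ω + v ω) (I + J) := by
  classical
  obtain ⟨s, c, hs, hu, rfl⟩ := hu
  obtain ⟨t, d, ht, hv, rfl⟩ := hv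
  have hsum : ∀ x : Set Ω → ℝ,
      ∑ A ∈ s ∪ t, ((s : Set (Set Ω)).indicator c A + (t : Set (Set Ω)).indicator d A) * x A =
        ∑ A ∈ s, c A * x A + ∑ A ∈ t, d A * x A := fun x => by
    simp only [add_mul, Finset.sum_add_distrib, ← Set.indicator_mul_left,
      Finset.sum_indicator_subset _ Finset.subset_union_left,
      Finset.sum_indicator_subset _ Finset.subset_union_right]
  refine ⟨s ∪ t, _, fun A hA => ?_, fun ω => by simp only [hu, hv, hsum], (hsum l).symm⟩
  rcases Finset.mem_union.1 hA with hA | hA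
  exacts [hs A hA, ht A hA]

theorem SimpleIntegralEq.sub (hu : SimpleIntegralEq 𝒜 l u I) (hv : SimpleIntegralEq 𝒜 l v J) :
    SimpleIntegralEq 𝒜 l (fun ω => u ω - v ω) (I - J) := by
  simpa [← sub_eq_add_neg] using hu.add (hv.const_mul (-1))

theorem SimpleIntegralEq.sum {ι : Type*} {t : Finset ι} {u : ι → Ω → ℝ} {I : ι → ℝ}
    (h : ∀ i ∈ t, SimpleIntegralEq 𝒜 l (u i) (I i)) :
    SimpleIntegralEq 𝒜 l (fun ω => ∑ i ∈ t, u i ω) (∑ i ∈ t, I i) := by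
  classical
  induction t using Finset.induction_on with
  | empty => simpa using simpleIntegralEq_zero
  | insert i t hi ih =>
    simp only [Finset.sum_insert hi]
    exact (h i (Finset.mem_insert_self i t)).add (ih fun j hj => h j (Finset.mem_insert_of_mem hj))

theorem SimpleIntegralEq.nonneg (hl : FAMeasure 𝒜 l) (h : SimpleIntegralEq 𝒜 l u I)
    (hu : ∀ ω, 0 ≤ u ω) : 0 ≤ I := by
  obtain ⟨s, c, hs, hu', rfl⟩ := h
  rw [hl.sum_mul_eq_sum_atom hs]
  refine Finset.sum_nonneg fun T hT => ?_
  obtain rfl | hne := T.eq_empty_or_nonempty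
  · simp
  obtain ⟨ω, hω⟩ | hempty := (atom s T).eq_empty_or_nonempty.symm
  · rw [← sum_mul_indicator_of_mem_atom (Finset.mem_powerset.1 hT) c hω, ← hu']
    exact mul_nonneg (hu ω) (hl.2.1 _ (atom_mem hl.1 hs (Finset.mem_powerset.1 hT) hne))
  · simp [hempty, hl.2.2.1]

theorem SimpleIntegralEq.le (hl : FAMeasure 𝒜 l) (hu : SimpleIntegralEq 𝒜 l u I)
    (hv : SimpleIntegralEq 𝒜 l v J) (huv : ∀ ω, u ω ≤ v ω) : I ≤ J :=
  sub_nonneg.1 <| (hv.sub hu).nonneg hl fun ω => sub_nonneg.2 (huv ω)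

end SimpleIntegral

section SimpleFunction

variable {u v : Ω → ℝ}

theorem IsSimple.sub (hu : IsSimple 𝒜 u) (hv : IsSimple 𝒜 v) :
    IsSimple 𝒜 (fun ω => u ω - v ω) :=
  let ⟨_, hI⟩ := hu.exists_simpleIntegralEq 0
  let ⟨_, hJ⟩ := hv.exists_simpleIntegralEq 0
  (hI.sub hJ).isSimple

theorem IsSimple.comp (h𝒜 : IsSetRing 𝒜) (hu : IsSimple 𝒜 u) {φ : ℝ → ℝ} (hφ : φ 0 = 0) :
    IsSimple 𝒜 (fun ω => φ (u ω)) := by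
  classical
  obtain ⟨s, c, hs, hu⟩ := hu
  have hsum := SimpleIntegralEq.sum (l := 0) (t := s.powerset.filter Finset.Nonempty)
    fun T hT => (simpleIntegralEq_indicator (atom_mem h𝒜 hs (Finset.mem_powerset.1
      (Finset.mem_filter.1 hT).1) (Finset.mem_filter.1 hT).2)).const_mul (φ (∑ A ∈ T, c A))
  convert hsum.isSimple using 2 with ω
  have hω := mem_atom_filter s ω
  have hsub := Finset.filter_subset (ω ∈ ·) s
  rw [Finset.sum_filter, Finset.sum_eq_single_of_mem _ (Finset.mem_powerset.2 hsub),
    Set.indicator_of_mem hω, hu, sum_mul_indicator_of_mem_atom hsub c hω]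
  · obtain h | h := (s.filter (fun A => ω ∈ A)).eq_empty_or_nonempty
    · simp [h, hφ]
    · simp [h]
  · intro T hT hne
    rw [Set.indicator_of_notMem fun hT' => hne (eq_of_mem_atom (Finset.mem_powerset.1 hT)
      hsub hT' hω), mul_zero, ite_self]

theorem IsSimple.setOf_mem (h𝒜 : IsSetRing 𝒜) (hu : IsSimple 𝒜 u) {K : Set ℝ} (hK : 0 ∉ K) :
    {ω | u ω ∈ K} ∈ 𝒜 := by
  classical
  obtain ⟨s, c, hs, hu⟩ := hu
  have : {ω | u ω ∈ K} = ⋃ T ∈ s.powerset.filter (fun T => ∑ A ∈ T, c A ∈ K), atom s T := by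
    ext ω
    simp only [Set.mem_ofPred_eq, Set.mem_iUnion, Finset.mem_filter, Finset.mem_powerset,
      exists_prop, hu]
    refine ⟨fun h => ⟨_, ⟨Finset.filter_subset _ _, ?_⟩, mem_atom_filter s ω⟩, ?_⟩
    · rwa [← sum_mul_indicator_of_mem_atom (Finset.filter_subset _ _) c (mem_atom_filter s ω)]
    · rintro ⟨T, ⟨hTs, hTK⟩, hω⟩
      rwa [sum_mul_indicator_of_mem_atom hTs c hω]
  rw [this]
  refine h𝒜.biUnion_mem _ fun T hT => ?_
  obtain ⟨hTs, hTK⟩ := Finset.mem_filter.1 hT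
  refine atom_mem h𝒜 hs (Finset.mem_powerset.1 hTs) (Finset.nonempty_iff_ne_empty.2 ?_)
  rintro rfl
  exact hK (by simpa using hTK)

theorem IsSimple.exists_abs_le (hu : IsSimple 𝒜 u) : ∃ M, 0 ≤ M ∧ ∀ ω, |u ω| ≤ M := by
  obtain ⟨s, c, -, hu⟩ := hu
  refine ⟨∑ A ∈ s, |c A|, Finset.sum_nonneg fun _ _ => abs_nonneg _, fun ω => ?_⟩
  rw [hu]
  refine (Finset.abs_sum_le_sum_abs _ _).trans (Finset.sum_le_sum fun A _ => ?_)
  rw [abs_mul]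
  refine mul_le_of_le_one_right (abs_nonneg _) ?_
  by_cases hω : ω ∈ A <;> simp [hω]

end SimpleFunction

section OuterInner

variable {E F : Set Ω}

theorem outer_le_ofReal {A : Set Ω} (hA : A ∈ 𝒜) (h : E ⊆ A) :
    outer 𝒜 l E ≤ ENNReal.ofReal (l A) :=
  iInf₂_le_of_le A hA (iInf_le _ h)

theorem outer_mono (h : E ⊆ F) : outer 𝒜 l E ≤ outer 𝒜 l F :=
  le_iInf₂ fun _ hA => le_iInf fun hF => outer_le_ofReal hA (h.trans hF)

theorem exists_mem_lt_of_outer_lt {x : ℝ} (h : outer 𝒜 l E < ENNReal.ofReal x) :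
    ∃ A ∈ 𝒜, E ⊆ A ∧ l A < x := by
  simp only [outer, iInf_lt_iff] at h
  obtain ⟨A, hA, hE, hlt⟩ := h
  exact ⟨A, hA, hE, (ENNReal.ofReal_lt_ofReal_iff'.1 hlt).1⟩

theorem ofReal_le_inner {B : Set Ω} (hB : B ∈ 𝒜) (h : B ⊆ E) :
    ENNReal.ofReal (l B) ≤ inner 𝒜 l E :=
  le_iSup₂_of_le B hB (le_iSup_of_le h le_rfl)

theorem inner_mono (h : E ⊆ F) : inner 𝒜 l E ≤ inner 𝒜 l F :=
  iSup₂_le fun _ hB => iSup_le fun hE => ofReal_le_inner hB (hE.trans h)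

theorem FAMeasure.union_le (hl : FAMeasure 𝒜 l) (hE : E ∈ 𝒜) (hF : F ∈ 𝒜) :
    l (E ∪ F) ≤ l E + l F := by
  have hFE := hl.1.sdiff_mem hF hE
  have hunion := hl.2.2.2 E hE _ hFE Set.disjoint_sdiff_right
  have hsplit := hl.2.2.2 _ hFE _ (hl.1.inter_mem hF hE) (Set.disjoint_sdiff_left.mono_right
    Set.inter_subset_right)
  rw [Set.union_sdiff_self] at hunion
  rw [Set.sdiff_union_inter] at hsplit
  linarith [hl.2.1 _ (hl.1.inter_mem hF hE)]

end OuterInner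

section Convergence

variable {g : ℕ → Ω → ℝ} {f : Ω → ℝ}

theorem abs_sub_le_of_lipschitzWith_one {φ : ℝ → ℝ} (hφ : LipschitzWith 1 φ) (x y : ℝ) :
    |φ x - φ y| ≤ |x - y| := by
  simpa [Real.dist_eq] using hφ.dist_le_mul x y

theorem ConvInMeasure.eventually_exists_mem (h : ConvInMeasure 𝒜 l g f) {c δ : ℝ} (hc : 0 < c)
    (hδ : 0 < δ) : ∀ᶠ n in atTop, ∃ D ∈ 𝒜, {ω | c < |g n ω - f ω|} ⊆ D ∧ l D < δ :=
  ((h c hc).eventually_lt_const (ENNReal.ofReal_pos.2 hδ)).mono fun _ => exists_mem_lt_of_outer_lt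

theorem ConvInMeasure.comp (h : ConvInMeasure 𝒜 l g f) {φ : ℝ → ℝ} (hφ : LipschitzWith 1 φ) :
    ConvInMeasure 𝒜 l (fun n ω => φ (g n ω)) (fun ω => φ (f ω)) := fun c hc =>
  tendsto_of_tendsto_of_tendsto_of_le_of_le tendsto_const_nhds (h c hc) (fun _ => zero_le)
    fun _ => outer_mono fun _ (hω : c < _) => hω.trans_le (abs_sub_le_of_lipschitzWith_one hφ _ _)

theorem CauchyL1.comp (hl : FAMeasure 𝒜 l) (hg : ∀ n, IsSimple 𝒜 (g n)) (h : CauchyL1 𝒜 l g)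
    {φ : ℝ → ℝ} (hφ : LipschitzWith 1 φ) (hφ0 : φ 0 = 0) :
    CauchyL1 𝒜 l (fun n ω => φ (g n ω)) := fun ε hε => by
  obtain ⟨N, hN⟩ := h ε hε
  refine ⟨N, fun m hm n hn => ?_⟩
  obtain ⟨I, hI, hIε⟩ := hN m hm n hn
  obtain ⟨I', hI'⟩ := (((hg m).comp hl.1 hφ0).sub ((hg n).comp hl.1 hφ0)).comp hl.1
    (φ := abs) abs_zero |>.exists_simpleIntegralEq l
  exact ⟨I', hI', (hI'.le hl hI fun ω => abs_sub_le_of_lipschitzWith_one hφ _ _).trans_lt hIε⟩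

theorem CauchyL1.exists_integral_min_abs_le (hl : FAMeasure 𝒜 l) (hg : ∀ n, IsSimple 𝒜 (g n))
    (h : CauchyL1 𝒜 l g) {η : ℝ} (hη : 0 < η) :
    ∃ ε > 0, ∃ N, ∀ n ≥ N, ∀ T, SimpleIntegralEq 𝒜 l (fun ω => min |g n ω| ε) T → T ≤ η := by
  obtain ⟨N, hN⟩ := h (η / 2) (half_pos hη)
  set S := {ω | g N ω ∈ ({0}ᶜ : Set ℝ)}
  have hS : S ∈ 𝒜 := (hg N).setOf_mem hl.1 (by simp)
  have hlS := hl.2.1 S hS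
  set ε := η / 2 / (l S + 1)
  refine ⟨ε, by positivity, N, fun n hn T hT => ?_⟩
  obtain ⟨V, hV, hVη⟩ := hN n hn N le_rfl
  have hpt : ∀ ω, min |g n ω| ε ≤ ε * S.indicator 𝟙 ω + |g n ω - g N ω| := fun ω => by
    by_cases hω : ω ∈ S
    · simp only [Set.indicator_of_mem hω, mul_one]
      linarith [min_le_right |g n ω| ε, abs_nonneg (g n ω - g N ω)]
    · have hgN : g N ω = 0 := by simpa [S] using hω
      simp only [Set.indicator_of_notMem hω, mul_zero, zero_add, hgN, sub_zero]
      exact min_le_left _ _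
  have hle := hT.le hl (((simpleIntegralEq_indicator hS).const_mul ε).add hV) hpt
  have hεS : ε * l S ≤ η / 2 := by
    rw [div_mul_eq_mul_div, div_le_iff₀ (by positivity)]
    nlinarith
  linarith

theorem CauchyL1.tendsto_integral_abs {h : ℕ → Ω → ℝ} (hl : FAMeasure 𝒜 l)
    (hh : ∀ n, IsSimple 𝒜 (h n)) (hC : CauchyL1 𝒜 l h) (hconv : ConvInMeasure 𝒜 l h 0)
    {K : ℕ → ℝ} (hK : ∀ n, SimpleIntegralEq 𝒜 l (fun ω => |h n ω|) (K n)) :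
    Tendsto K atTop (𝓝 0) := by
  rw [Metric.tendsto_atTop]
  intro η hη
  obtain ⟨ε, hε, N₁, hN₁⟩ := hC.exists_integral_min_abs_le hl hh (η := η / 4) (by positivity)
  obtain ⟨N₂, hN₂⟩ := hC (η / 4) (by positivity)
  obtain ⟨M, hM0, hM⟩ := (hh N₂).exists_abs_le
  obtain ⟨N₃, hN₃⟩ := eventually_atTop.1
    (hconv.eventually_exists_mem hε (δ := η / 4 / (M + 1)) (by positivity))
  refine ⟨max N₁ (max N₂ N₃), fun n hn => ?_⟩
  simp only [ge_iff_le, max_le_iff] at hn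
  obtain ⟨D, hD, hsub, hlD⟩ := hN₃ n hn.2.2
  obtain ⟨T, hT⟩ := ((hh n).comp hl.1 (φ := fun x => min |x| ε) (by simp [hε.le]))
    |>.exists_simpleIntegralEq l
  obtain ⟨V, hV, hVη⟩ := hN₂ n hn.2.1 N₂ le_rfl
  have hpt : ∀ ω, |h n ω| ≤ min |h n ω| ε + |h n ω - h N₂ ω| + M * D.indicator 𝟙 ω := fun ω => by
    by_cases hω : ω ∈ D
    · simp only [Set.indicator_of_mem hω, mul_one]
      linarith [abs_sub_abs_le_abs_sub (h n ω) (h N₂ ω), hM ω, le_min (abs_nonneg (h n ω)) hε.le]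
    · have hsmall : |h n ω| ≤ ε := by
        by_contra hlt
        exact hω (hsub (by simpa using hlt))
      simp only [Set.indicator_of_notMem hω, mul_zero, add_zero, min_eq_left hsmall]
      linarith [abs_nonneg (h n ω - h N₂ ω)]
  have hle := (hK n).le hl ((hT.add hV).add ((simpleIntegralEq_indicator hD).const_mul M)) hpt
  have hK0 : 0 ≤ K n := (hK n).nonneg hl fun ω => abs_nonneg _
  have hMD : M * l D ≤ η / 4 := by
    calc M * l D ≤ (M + 1) * (η / 4 / (M + 1)) := by nlinarith [hl.2.1 D hD]
      _ = η / 4 := by field_simp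
  rw [Real.dist_0_eq_abs, abs_of_nonneg hK0]
  linarith [hN₁ n hn.1 T hT]

theorem CauchyL1.tendsto_integral_comp (hl : FAMeasure 𝒜 l) (hg : ∀ n, IsSimple 𝒜 (g n))
    (hC : CauchyL1 𝒜 l g) (hconv : ConvInMeasure 𝒜 l g f) {φ : ℝ → ℝ} (hφ : LipschitzWith 1 φ)
    (hφ0 : φ 0 = 0) (hφf : ∀ ω, φ (f ω) = 0) (hφnn : ∀ x, 0 ≤ φ x) {K : ℕ → ℝ}
    (hK : ∀ n, SimpleIntegralEq 𝒜 l (fun ω => φ (g n ω)) (K n)) :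
    Tendsto K atTop (𝓝 0) := by
  have hφf' : (fun ω => φ (f ω)) = 0 := funext hφf
  refine (hC.comp hl hg hφ hφ0).tendsto_integral_abs hl (fun n => (hg n).comp hl.1 hφ0)
    (hφf' ▸ hconv.comp hφ) fun n => ?_
  simpa only [abs_of_nonneg (hφnn _)] using hK n

end Convergence

section Bounds

variable {f g : Ω → ℝ} {I J : ℝ} {D : Set Ω}

theorem SimpleIntegralEq.outer_setOf_le_le (hl : FAMeasure 𝒜 l) (hJ : SimpleIntegralEq 𝒜 l g J)
    {K : ℝ} (hK : SimpleIntegralEq 𝒜 l (fun ω => max (-g ω) 0) K) (hD : D ∈ 𝒜) {t η : ℝ}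
    (hη : 0 < η) (hηt : 2 * η < t) (hfD : {ω | η < |g ω - f ω|} ⊆ D) :
    outer 𝒜 l {ω | t ≤ f ω} ≤ ENNReal.ofReal ((J + K) / (t - 2 * η) + l D) := by
  set C := {ω | g ω ∈ Set.Ioi (t - 2 * η)}
  have hC : C ∈ 𝒜 := hJ.isSimple.setOf_mem hl.1 (by simp; linarith)
  have hpt : ∀ ω, (t - 2 * η) * C.indicator 𝟙 ω ≤ g ω + max (-g ω) 0 := fun ω => by
    by_cases hω : ω ∈ C
    · have hgω : t - 2 * η < g ω := hω
      simp only [Set.indicator_of_mem hω, mul_one]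
      linarith [le_max_right (-g ω) 0]
    · simp only [Set.indicator_of_notMem hω, mul_zero]
      linarith [le_max_left (-g ω) 0]
  have hlC : l C ≤ (J + K) / (t - 2 * η) := by
    rw [le_div_iff₀ (by linarith), mul_comm]
    exact ((simpleIntegralEq_indicator hC).const_mul _).le hl (hJ.add hK) hpt
  have hcover : {ω | t ≤ f ω} ⊆ C ∪ D := fun ω (hω : t ≤ f ω) => by
    by_cases hωD : ω ∈ D
    · exact Or.inr hωD
    · have : |g ω - f ω| ≤ η := not_lt.1 fun h => hωD (hfD h)
      exact Or.inl (show t - 2 * η < g ω by linarith [(abs_le.1 this).1])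
  calc outer 𝒜 l {ω | t ≤ f ω} ≤ ENNReal.ofReal (l (C ∪ D)) :=
        outer_le_ofReal (hl.1.union_mem hC hD) hcover
    _ ≤ _ := ENNReal.ofReal_le_ofReal (by linarith [hl.union_le hC hD])

theorem SimpleIntegralEq.exists_mem_subset_setOf_pos (hl : FAMeasure 𝒜 l)
    (hJ : SimpleIntegralEq 𝒜 l g J) {ε T P : ℝ} (hε : 0 < ε)
    (hT : SimpleIntegralEq 𝒜 l (fun ω => min |g ω| ε) T)
    (hP : SimpleIntegralEq 𝒜 l (fun ω => max (g ω - 1) 0) P) (hD : D ∈ 𝒜)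
    (hfD : {ω | ε / 2 < |g ω - f ω|} ⊆ D) :
    ∃ F ∈ 𝒜, F ⊆ {ω | 0 < f ω} ∧ J ≤ l F + l D + T + P := by
  set F := {ω | g ω ∈ Set.Ioi ε} \ D
  have hF : F ∈ 𝒜 := hl.1.sdiff_mem (hJ.isSimple.setOf_mem hl.1 (by simp [hε.le])) hD
  refine ⟨F, hF, fun ω ⟨(hgω : ε < g ω), hωD⟩ => ?_, ?_⟩
  · have : |g ω - f ω| ≤ ε / 2 := not_lt.1 fun h => hωD (hfD h)
    show 0 < f ω
    linarith [(abs_le.1 this).2]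
  have hpt : ∀ ω, g ω ≤
      F.indicator 𝟙 ω + D.indicator 𝟙 ω + min |g ω| ε + max (g ω - 1) 0 := fun ω => by
    have hind : ∀ E : Set Ω, 0 ≤ E.indicator 𝟙 ω := fun E => Set.indicator_nonneg (by simp) ω
    by_cases hgε : g ω ≤ ε
    · linarith [hind F, hind D, min_le_min_right ε (le_abs_self (g ω)), min_eq_left hgε,
        le_max_right (g ω - 1) 0]
    · have h1 : 1 ≤ F.indicator 𝟙 ω + D.indicator 𝟙 ω := by
        by_cases hωD : ω ∈ D
        · simp [Set.indicator_of_mem hωD, hind F]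
        · have hωF : ω ∈ F := ⟨not_le.1 hgε, hωD⟩
          simp [Set.indicator_of_mem hωF, hind D]
      linarith [le_max_left (g ω - 1) 0, le_min (abs_nonneg (g ω)) hε.le]
  exact hJ.le hl ((((simpleIntegralEq_indicator hF).add
    (simpleIntegralEq_indicator hD)).add hT).add hP) hpt

theorem HasIntegral.outer_setOf_le_le_div (hl : FAMeasure 𝒜 l) (hf0 : ∀ ω, 0 ≤ f ω)
    (hf : HasIntegral 𝒜 l f I) {t : ℝ} (ht : 0 < t) :
    outer 𝒜 l {ω | t ≤ f ω} ≤ ENNReal.ofReal (I / t) := by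
  obtain ⟨g, J, hg, hconv, hC, hJ, hJI⟩ := hf
  choose K hK using fun n =>
    ((hg n).comp hl.1 (φ := fun x => max (-x) 0) (by simp)).exists_simpleIntegralEq l
  have hK0 := hC.tendsto_integral_comp hl hg hconv (LipschitzWith.id.neg.max_const 0) (by simp)
    (fun ω => by simp [hf0 ω]) (fun _ => le_max_right _ _) hK
  have hlim : Tendsto (fun η => (I + 2 * η) / (t - 2 * η) + η) (𝓝[>] 0) (𝓝 (I / t)) := by
    have : ContinuousAt (fun η : ℝ => (I + 2 * η) / (t - 2 * η) + η) 0 := by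
      fun_prop (disch := simp [ht.ne'])
    simpa using this.tendsto.mono_left nhdsWithin_le_nhds
  refine ge_of_tendsto (ENNReal.tendsto_ofReal hlim) ?_
  filter_upwards [Ioo_mem_nhdsGT (half_pos ht)] with η ⟨hη, hηt⟩
  obtain ⟨n, hKn, hJn, D, hD, hfD, hlD⟩ := ((hK0.eventually (gt_mem_nhds hη)).and
    ((hJI.eventually (gt_mem_nhds (lt_add_of_pos_right I hη))).and
      (hconv.eventually_exists_mem hη hη))).exists
  refine ((hJ n).outer_setOf_le_le hl (hK n) hD hη (by linarith) hfD).trans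
    (ENNReal.ofReal_le_ofReal ?_)
  gcongr ?_ / _ + ?_ <;> linarith

theorem HasIntegral.ofReal_le_inner (hl : FAMeasure 𝒜 l) (hf1 : ∀ ω, f ω ≤ 1)
    (hf : HasIntegral 𝒜 l f I) : ENNReal.ofReal I ≤ inner 𝒜 l {ω | 0 < f ω} := by
  obtain ⟨g, J, hg, hconv, hC, hJ, hJI⟩ := hf
  choose P hP using fun n =>
    ((hg n).comp hl.1 (φ := fun x => max (x - 1) 0) (by simp)).exists_simpleIntegralEq l
  have hP0 := hC.tendsto_integral_comp hl hg hconv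
    ((IsometryEquiv.subRight (1 : ℝ)).isometry.lipschitz.max_const 0) (by simp)
    (fun ω => by simp [hf1 ω]) (fun _ => le_max_right _ _) hP
  have hlim : Tendsto (fun η => I - 4 * η) (𝓝[>] 0) (𝓝 I) := by
    have : ContinuousAt (fun η : ℝ => I - 4 * η) 0 := by fun_prop
    simpa using this.tendsto.mono_left nhdsWithin_le_nhds
  refine le_of_tendsto (ENNReal.tendsto_ofReal hlim) ?_
  filter_upwards [self_mem_nhdsWithin] with η (hη : 0 < η)
  obtain ⟨ε, hε, N, hN⟩ := hC.exists_integral_min_abs_le hl hg hη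
  obtain ⟨n, hn, hPn, hJn, D, hD, hfD, hlD⟩ := ((eventually_ge_atTop N).and
    ((hP0.eventually (gt_mem_nhds hη)).and ((hJI.eventually (lt_mem_nhds (sub_lt_self I hη))).and
      (hconv.eventually_exists_mem (half_pos hε) hη)))).exists
  obtain ⟨T, hT⟩ := ((hg n).comp hl.1 (φ := fun x => min |x| ε) (by simp [hε.le]))
    |>.exists_simpleIntegralEq l
  obtain ⟨F, hF, hsub, hJF⟩ := (hJ n).exists_mem_subset_setOf_pos hl hε hT (hP n) hD hfD
  exact (ENNReal.ofReal_le_ofReal (by linarith [hN n hn T hT])).trans (FA.ofReal_le_inner hF hsub)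

end Bounds

end FA

/-- If `1_A ≤ f ≤ 1_B` pointwise and `f` is `l`-integrable with integral `I`,
then `l*(A) ≤ I ≤ l_*(B)`. -/
theorem stmt0 {Ω : Type*} (𝒜 : Set (Set Ω)) (l : Set Ω → ℝ)
    (hl : FAMeasure 𝒜 l) (A B : Set Ω) (f : Ω → ℝ) (I : ℝ)
    (hAf : ∀ ω, A.indicator (fun _ => (1 : ℝ)) ω ≤ f ω)
    (hfB : ∀ ω, f ω ≤ B.indicator (fun _ => (1 : ℝ)) ω)
    (hf : HasIntegral 𝒜 l f I) :
    outer 𝒜 l A ≤ ENNReal.ofReal I ∧ ENNReal.ofReal I ≤ inner 𝒜 l B := by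
  have hf0 : ∀ ω, 0 ≤ f ω := fun ω => (Set.indicator_nonneg (by simp) ω).trans (hAf ω)
  have hf1 : ∀ ω, f ω ≤ 1 := fun ω => (hfB ω).trans (by by_cases hω : ω ∈ B <;> simp [hω])
  constructor
  · calc outer 𝒜 l A ≤ outer 𝒜 l {ω | 1 ≤ f ω} :=
          outer_mono fun ω hω => by simpa [hω] using hAf ω
      _ ≤ ENNReal.ofReal (I / 1) := hf.outer_setOf_le_le_div hl hf0 one_pos
      _ = ENNReal.ofReal I := by rw [div_one]
  · refine (hf.ofReal_le_inner hl hf1).trans (inner_mono fun ω (hω : 0 < f ω) => ?_)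
    by_contra hωB
    exact hω.not_ge (by simpa [hωB] using hfB ω)
end

section
/- Let φ : ℝ → ℝ be convex with minimizer x₀ ∈ ℝ satisfying D⁺φ(x₀) = D⁻φ(x₀) = 0, and for u ≤ v define h_u^v(x) = (v − max(x, u))⁺·1_{x > x₀} − (min(v, x) − u)⁺·1_{x ≤ x₀}. Then there exists a countably additive Borel measure ν ≥ 0 on ℝ with ν({x₀}) = 0, each h_u^v ν-integrable, and φ(v) = φ(u) + ∫ h_u^v dν for all v ≥ u. -/
/-!
The right derivative `g` of `φ` is monotone and right-continuous, hence the distribution function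
of a Stieltjes measure `ν`, whose atom at `x₀` is `g x₀ - g (x₀-) = D⁺φ(x₀) - D⁻φ(x₀) = 0`.
By Tonelli, `∫ h_u^v dν = ∫_u^v (g(t-) - g x₀) dt`: the two halves of `h_u^v` integrate to
`∫_u^v ν (x₀, t) dt` and `∫_u^v ν [t, x₀] dt`, the positive and negative parts of `g(t-) - g x₀`.
Since `g(t-) = g t` off a countable set and `φ` is the integral of its right derivative, the
integral equals `φ v - φ u`.
-/

open MeasureTheory

/-- The kernel `h_u^v(x) = (v − x∨u)⁺·1_{x > x₀} − (v∧x − u)⁺·1_{x ≤ x₀}`. -/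
noncomputable def huv (x₀ u v x : ℝ) : ℝ :=
  (Set.Ioi x₀).indicator (fun y => max (v - max y u) 0) x -
    (Set.Iic x₀).indicator (fun y => max (min v y - u) 0) x

open Set Filter Topology Function

lemma Continuous.continuousAt_slope {φ : ℝ → ℝ} (hφ : Continuous φ) {x y : ℝ} (hxy : x ≠ y) :
    ContinuousAt (slope φ x) y := by
  simp only [funext (slope_def_field φ x)]
  fun_prop (disch := exact sub_ne_zero.2 hxy.symm)

namespace ConvexOn

variable {φ : ℝ → ℝ}

lemma monotone_rightDeriv (hφ : ConvexOn ℝ univ φ) : Monotone fun x ↦ derivWithin φ (Ioi x) x :=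
  fun x y hxy ↦ hφ.monotoneOn_rightDeriv (by simp) (by simp) hxy

lemma continuousWithinAt_rightDeriv (hφ : ConvexOn ℝ univ φ) (x : ℝ) :
    ContinuousWithinAt (fun t ↦ derivWithin φ (Ioi t) t) (Ici x) x := by
  have hc : Continuous φ := hφ.locallyLipschitz.continuous
  have hg := hφ.monotone_rightDeriv
  rw [← continuousWithinAt_Ioi_iff_Ici, hg.continuousWithinAt_Ioi_iff_rightLim_eq]
  refine le_antisymm ?_ (hg.le_rightLim le_rfl)
  have hslope : ∀ y, x < y → rightLim (fun t ↦ derivWithin φ (Ioi t) t) x ≤ slope φ x y := by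
    intro y hxy
    have hlim : Tendsto (fun t ↦ slope φ t y) (𝓝[>] x) (𝓝 (slope φ x y)) := by
      simp only [slope_comm φ _ y]
      exact (hc.continuousAt_slope hxy.ne').tendsto.mono_left nhdsWithin_le_nhds
    refine le_of_tendsto_of_tendsto (hg.tendsto_rightLim x) hlim ?_
    filter_upwards [Ioo_mem_nhdsGT hxy] with t ht
    exact hφ.rightDeriv_le_slope trivial trivial ht.2
      (hφ.differentiableWithinAt_Ioi_of_mem_interior (by simp))
  exact ge_of_tendsto ((hasDerivWithinAt_iff_tendsto_slope' self_notMem_Ioi).1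
    (hφ.hasDerivWithinAt_rightDeriv_of_mem_interior (by simp)))
    (eventually_nhdsWithin_of_forall hslope)

lemma leftLim_rightDeriv (hφ : ConvexOn ℝ univ φ) (x : ℝ) :
    leftLim (fun t ↦ derivWithin φ (Ioi t) t) x = derivWithin φ (Iio x) x := by
  have hc : Continuous φ := hφ.locallyLipschitz.continuous
  have hg := hφ.monotone_rightDeriv
  refine le_antisymm ?_ ?_
  · refine le_of_tendsto (hg.tendsto_leftLim x) ?_
    filter_upwards [self_mem_nhdsWithin] with t (ht : t < x)
    exact (hφ.rightDeriv_le_slope trivial trivial ht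
      (hφ.differentiableWithinAt_Ioi_of_mem_interior (by simp))).trans
      (hφ.slope_le_leftDeriv trivial trivial ht
        (hφ.differentiableWithinAt_Iio_of_mem_interior (by simp)))
  · refine le_of_tendsto ((hasDerivWithinAt_iff_tendsto_slope' self_notMem_Iio).1
      (hφ.hasDerivWithinAt_leftDeriv_of_mem_interior (by simp))) ?_
    filter_upwards [self_mem_nhdsWithin] with s (hs : s < x)
    rw [slope_comm]
    refine le_of_tendsto (x := 𝓝[<] x)
      ((hc.continuousAt_slope hs.ne).tendsto.mono_left nhdsWithin_le_nhds) ?_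
    filter_upwards [Ioo_mem_nhdsLT hs] with t ht
    calc slope φ s t ≤ derivWithin φ (Iio t) t :=
          hφ.slope_le_leftDeriv trivial trivial ht.1
            (hφ.differentiableWithinAt_Iio_of_mem_interior (by simp))
      _ ≤ derivWithin φ (Ioi t) t := hφ.leftDeriv_le_rightDeriv_of_mem_interior (by simp)
      _ ≤ _ := hg.le_leftLim ht.2

lemma integral_rightDeriv (hφ : ConvexOn ℝ univ φ) {u v : ℝ} (huv : u ≤ v) :
    ∫ t in u..v, derivWithin φ (Ioi t) t = φ v - φ u :=
  intervalIntegral.integral_eq_sub_of_hasDeriv_right_of_le huv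
    hφ.locallyLipschitz.continuous.continuousOn
    (fun _ _ ↦ hφ.hasDerivWithinAt_rightDeriv_of_mem_interior (by simp))
    hφ.monotone_rightDeriv.intervalIntegrable

noncomputable def rightDerivStieltjes (hφ : ConvexOn ℝ univ φ) : StieltjesFunction ℝ where
  toFun x := derivWithin φ (Ioi x) x
  mono' := hφ.monotone_rightDeriv
  right_continuous' := hφ.continuousWithinAt_rightDeriv

@[simp]
lemma coe_rightDerivStieltjes (hφ : ConvexOn ℝ univ φ) :
    ⇑hφ.rightDerivStieltjes = fun x ↦ derivWithin φ (Ioi x) x :=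
  rfl

end ConvexOn

noncomputable def huvPos (x₀ u v : ℝ) : ℝ → ℝ := (Ioi x₀).indicator fun y ↦ max (v - max y u) 0

noncomputable def huvNeg (x₀ u v : ℝ) : ℝ → ℝ := (Iic x₀).indicator fun y ↦ max (min v y - u) 0

lemma huv_eq_sub (x₀ u v : ℝ) : huv x₀ u v = huvPos x₀ u v - huvNeg x₀ u v := rfl

lemma lintegral_prodMk_preimage_comm {α β : Type*} [MeasurableSpace α] [MeasurableSpace β]
    {μ : Measure α} {ν : Measure β} [SFinite μ] [SFinite ν] {E : Set (α × β)}
    (hE : MeasurableSet E) :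
    ∫⁻ x, ν (Prod.mk x ⁻¹' E) ∂μ = ∫⁻ y, μ ((·, y) ⁻¹' E) ∂ν := by
  rw [← Measure.prod_apply hE, Measure.prod_apply_symm hE]

lemma lintegral_huvPos (ν : Measure ℝ) [SFinite ν] (x₀ u v : ℝ) :
    ∫⁻ x, ENNReal.ofReal (huvPos x₀ u v x) ∂ν = ∫⁻ t in Ioc u v, ν (Ioo x₀ t) := by
  let E := {p : ℝ × ℝ | x₀ < p.1 ∧ p.1 < p.2 ∧ u < p.2 ∧ p.2 ≤ v}
  have hE : MeasurableSet E := by unfold E; measurability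
  have hx : ∀ x, ENNReal.ofReal (huvPos x₀ u v x) = volume (Prod.mk x ⁻¹' E) := by
    intro x
    by_cases hx : x₀ < x
    · have : Prod.mk x ⁻¹' E = Ioc (max x u) v := by ext t; simp [E, hx]; tauto
      simp [huvPos, hx, this, ENNReal.ofReal_max]
    · simp [huvPos, hx, E]
  have ht : ∀ t, ν ((·, t) ⁻¹' E) = (Ioc u v).indicator (fun t ↦ ν (Ioo x₀ t)) t := by
    intro t
    by_cases ht : t ∈ Ioc u v
    · have : (·, t) ⁻¹' E = Ioo x₀ t := by ext x; simp_all [E]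
      simp [ht, this]
    · rw [indicator_of_notMem ht, ← measure_empty (μ := ν)]
      congr 1
      ext x
      simpa [E] using fun _ _ hut htv ↦ ht ⟨hut, htv⟩
  simp_rw [hx, lintegral_prodMk_preimage_comm hE, ht, lintegral_indicator measurableSet_Ioc]

lemma lintegral_huvNeg (ν : Measure ℝ) [SFinite ν] (x₀ u v : ℝ) :
    ∫⁻ x, ENNReal.ofReal (huvNeg x₀ u v x) ∂ν = ∫⁻ t in Ioc u v, ν (Icc t x₀) := by
  let E := {p : ℝ × ℝ | p.1 ≤ x₀ ∧ p.2 ≤ p.1 ∧ u < p.2 ∧ p.2 ≤ v}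
  have hE : MeasurableSet E := by unfold E; measurability
  have hx : ∀ x, ENNReal.ofReal (huvNeg x₀ u v x) = volume (Prod.mk x ⁻¹' E) := by
    intro x
    by_cases hx : x ≤ x₀
    · have : Prod.mk x ⁻¹' E = Ioc u (min v x) := by ext t; simp [E, hx]; tauto
      simp [huvNeg, hx, this, ENNReal.ofReal_max]
    · simp [huvNeg, hx, E]
  have ht : ∀ t, ν ((·, t) ⁻¹' E) = (Ioc u v).indicator (fun t ↦ ν (Icc t x₀)) t := by
    intro t
    by_cases ht : t ∈ Ioc u v
    · have : (·, t) ⁻¹' E = Icc t x₀ := by ext x; simp_all [E, and_comm]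
      simp [ht, this]
    · rw [indicator_of_notMem ht, ← measure_empty (μ := ν)]
      congr 1
      ext x
      simpa [E] using fun _ _ hut htv ↦ ht ⟨hut, htv⟩
  simp_rw [hx, lintegral_prodMk_preimage_comm hE, ht, lintegral_indicator measurableSet_Ioc]

lemma integrable_and_integral_eq_of_lintegral_ofReal_eq {α β : Type*} [MeasurableSpace α]
    [MeasurableSpace β] {μ : Measure α} {ν : Measure β} {f : α → ℝ} {g : β → ℝ}
    (hf₀ : 0 ≤ f) (hf : AEStronglyMeasurable f μ) (hg₀ : 0 ≤ g) (hg : Integrable g ν)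
    (h : ∫⁻ x, ENNReal.ofReal (f x) ∂μ = ∫⁻ y, ENNReal.ofReal (g y) ∂ν) :
    Integrable f μ ∧ ∫ x, f x ∂μ = ∫ y, g y ∂ν := by
  refine ⟨⟨hf, ?_⟩, ?_⟩
  · rw [hasFiniteIntegral_iff_ofReal (ae_of_all _ hf₀), h]
    exact (hasFiniteIntegral_iff_ofReal (ae_of_all _ hg₀)).1 hg.hasFiniteIntegral
  · rw [integral_eq_lintegral_of_nonneg_ae (ae_of_all _ hf₀) hf,
      integral_eq_lintegral_of_nonneg_ae (ae_of_all _ hg₀) hg.aestronglyMeasurable, h]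

theorem StieltjesFunction.integrable_huv_and_integral_eq (F : StieltjesFunction ℝ) (x₀ : ℝ)
    {u v : ℝ} (huv' : u ≤ v) :
    Integrable (huv x₀ u v) F.measure ∧
      ∫ x, huv x₀ u v x ∂F.measure = ∫ t in u..v, (F t - F x₀) := by
  have hint : IntegrableOn (fun t ↦ F t - F x₀) (Ioc u v) :=
    (F.mono.intervalIntegrable.sub intervalIntegrable_const).1
  have hleftLim : ∀ᵐ t ∂volume.restrict (Ioc u v), leftLim F t = F t :=
    ae_restrict_of_ae (ae_iff.2 (F.countable_leftLim_ne.measure_zero volume))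
  have hpos := integrable_and_integral_eq_of_lintegral_ofReal_eq
    (μ := F.measure) (f := huvPos x₀ u v) (g := fun t ↦ max (F t - F x₀) 0)
    (indicator_nonneg fun _ _ ↦ le_max_right _ _)
    ((Measurable.indicator (by fun_prop) isOpen_Ioi.measurableSet).aestronglyMeasurable)
    (fun _ ↦ le_max_right _ _) hint.pos_part <| by
      rw [lintegral_huvPos]
      refine lintegral_congr_ae ?_
      filter_upwards [hleftLim] with t ht
      simp [F.measure_Ioo, ht, ENNReal.ofReal_max]
  have hneg := integrable_and_integral_eq_of_lintegral_ofReal_eq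
    (μ := F.measure) (f := huvNeg x₀ u v) (g := fun t ↦ max (-(F t - F x₀)) 0)
    (indicator_nonneg fun _ _ ↦ le_max_right _ _)
    ((Measurable.indicator (by fun_prop) isClosed_Iic.measurableSet).aestronglyMeasurable)
    (fun _ ↦ le_max_right _ _) hint.neg_part <| by
      rw [lintegral_huvNeg]
      refine lintegral_congr_ae ?_
      filter_upwards [hleftLim] with t ht
      simp [F.measure_Icc, ht, ENNReal.ofReal_max]
  refine ⟨hpos.1.sub hneg.1, ?_⟩
  simp only [huv_eq_sub, Pi.sub_apply]
  rw [integral_sub hpos.1 hneg.1, hpos.2, hneg.2,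
    ← integral_sub hint.pos_part hint.neg_part, intervalIntegral.integral_of_le huv']
  simp only [max_zero_sub_max_neg_zero_eq_self]

theorem ConvexOn.eq_add_integral_huv {φ : ℝ → ℝ} (hφ : ConvexOn ℝ univ φ) (x₀ : ℝ) {u v : ℝ}
    (huv' : u ≤ v) :
    φ v = φ u + (v - u) * derivWithin φ (Ioi x₀) x₀ +
      ∫ x, huv x₀ u v x ∂hφ.rightDerivStieltjes.measure := by
  rw [(hφ.rightDerivStieltjes.integrable_huv_and_integral_eq x₀ huv').2]
  simp only [ConvexOn.coe_rightDerivStieltjes]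
  rw [intervalIntegral.integral_sub hφ.monotone_rightDeriv.intervalIntegrable
    intervalIntegrable_const, intervalIntegral.integral_const, hφ.integral_rightDeriv huv',
    smul_eq_mul]
  ring

theorem stmt11_general (φ : ℝ → ℝ) (hconv : ConvexOn ℝ Set.univ φ)
    (x₀ : ℝ)
    (hDplus : HasDerivWithinAt φ 0 (Set.Ioi x₀) x₀)
    (hDminus : HasDerivWithinAt φ 0 (Set.Iio x₀) x₀) :
    ∃ ν : Measure ℝ, ν {x₀} = 0 ∧
      (∀ u v : ℝ, u ≤ v → Integrable (huv x₀ u v) ν) ∧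
      ∀ u v : ℝ, u ≤ v → φ v = φ u + ∫ x, huv x₀ u v x ∂ν := by
  have hright : derivWithin φ (Ioi x₀) x₀ = 0 := hDplus.derivWithin (uniqueDiffWithinAt_Ioi x₀)
  have hleft : derivWithin φ (Iio x₀) x₀ = 0 := hDminus.derivWithin (uniqueDiffWithinAt_Iio x₀)
  refine ⟨hconv.rightDerivStieltjes.measure, ?_,
    fun u v huv' ↦ (hconv.rightDerivStieltjes.integrable_huv_and_integral_eq x₀ huv').1,
    fun u v huv' ↦ ?_⟩
  · simp [StieltjesFunction.measure_singleton, hconv.leftLim_rightDeriv, hright, hleft]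
  · simpa [hright] using hconv.eq_add_integral_huv x₀ huv'

/-- a convex `φ` with minimizer `x₀` and vanishing one-sided derivatives
at `x₀` admits a countably additive Borel representation
`φ(v) = φ(u) + ∫ h_u^v dν` with `ν ≥ 0`, `ν({x₀}) = 0`. -/
theorem stmt11 (φ : ℝ → ℝ) (hconv : ConvexOn ℝ Set.univ φ)
    (x₀ : ℝ) (hmin : ∀ x, φ x₀ ≤ φ x)
    (hDplus : HasDerivWithinAt φ 0 (Set.Ioi x₀) x₀)
    (hDminus : HasDerivWithinAt φ 0 (Set.Iio x₀) x₀) :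
    ∃ ν : Measure ℝ, ν {x₀} = 0 ∧
      (∀ u v : ℝ, u ≤ v → Integrable (huv x₀ u v) ν) ∧
      ∀ u v : ℝ, u ≤ v → φ v = φ u + ∫ x, huv x₀ u v x ∂ν :=
  stmt11_general φ hconv x₀ hDplus hDminus
end

section
/- Let u ≤ v be reals, x₀ ∈ ℝ, and define h_u^v(x) = (v − max(x, u))⁺·1_{x > x₀} − (min(v, x) − u)⁺·1_{x ≤ x₀}. Suppose ν is a nonnegative countably additive Borel measure on ℝ such that each h_u^v is ν-integrable and φ(v) = φ(u) + ∫ h_u^v dν for all v ≥ u. Then φ is convex on ℝ; moreover, if u < v and ν((u, v)) = 0, then D⁻φ(v) ≤ D⁺φ(u). -/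
/-!
For fixed `x`, `v ↦ h_u^v(x)` is convex on `[u, ∞)`: the part on `x > x₀` is the positive part
of an affine function, and on `x ≤ x₀` it is minus `min (v - u) (x - u)⁺`, a concave function.
Integrating against `ν` preserves convexity, so `φ` is convex on every `[u, ∞)`, hence on `ℝ`.

If `ν` does not charge `(u, v)`, then off `(u, v)` each `h_u^w` with `w ∈ [u, v]` is the
multiple `(w - u) / (v - u)` of `h_u^v`, so `φ` is affine on `[u, v]` and both one-sided
derivatives equal the chord slope.
-/

open MeasureTheory

open Set

lemma convexOn_max_sub_const_zero (c : ℝ) : ConvexOn ℝ univ fun v : ℝ => max (v - c) 0 :=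
  ((convexOn_id convex_univ).sub (concaveOn_const c convex_univ)).sup (convexOn_const 0 convex_univ)

lemma concaveOn_max_min_sub_zero (u x : ℝ) :
    ConcaveOn ℝ (Ici u) fun v : ℝ => max (min v x - u) 0 := by
  refine (((concaveOn_id (convex_Ici u)).sub (convexOn_const u (convex_Ici u))).inf
    (concaveOn_const (max (x - u) 0) (convex_Ici u))).congr fun v (hv : u ≤ v) => ?_
  simp only [Pi.inf_apply, Pi.sub_apply, id]
  rcases le_total x u with h | h
  · simp [min_eq_right (h.trans hv), h, hv]
  · rw [max_eq_left (sub_nonneg.2 h), min_sub_sub_right,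
      max_eq_left (sub_nonneg.2 (le_min hv h))]

lemma convexOn_huv (x₀ u x : ℝ) : ConvexOn ℝ (Ici u) fun v => huv x₀ u v x := by
  unfold huv
  refine ConvexOn.sub ?_ ?_
  · by_cases hx : x ∈ Ioi x₀
    · simpa [indicator_of_mem hx] using
        (convexOn_max_sub_const_zero (max x u)).subset (subset_univ _) (convex_Ici u)
    · simpa [indicator_of_notMem hx] using convexOn_const (0:ℝ) (convex_Ici u)
  · by_cases hx : x ∈ Iic x₀
    · simpa [indicator_of_mem hx] using concaveOn_max_min_sub_zero u x
    · simpa [indicator_of_notMem hx] using concaveOn_const (0:ℝ) (convex_Ici u)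

theorem ConvexOn.integral {α : Type*} [MeasurableSpace α] {μ : Measure α} {s : Set ℝ}
    {f : ℝ → α → ℝ} (hf : ∀ x, ConvexOn ℝ s fun v => f v x)
    (hint : ∀ v ∈ s, Integrable (f v) μ) (hs : Convex ℝ s) :
    ConvexOn ℝ s fun v => ∫ x, f v x ∂μ := by
  refine ⟨hs, fun a ha b hb p q hp hq hpq => ?_⟩
  simp only [smul_eq_mul]
  rw [← integral_const_mul, ← integral_const_mul,
    ← integral_add ((hint a ha).const_mul p) ((hint b hb).const_mul q)]
  exact integral_mono (hint _ (hs ha hb hp hq hpq))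
    (((hint a ha).const_mul p).add ((hint b hb).const_mul q))
    fun x => (hf x).2 ha hb hp hq hpq

lemma huv_eq_div_mul_huv {x₀ u v w x : ℝ} (huv_lt : u < v) (hw : w ∈ Icc u v)
    (hx : x ∉ Ioo u v) : huv x₀ u w x = (w - u) / (v - u) * huv x₀ u v x := by
  have hvu : v - u ≠ 0 := sub_ne_zero.2 huv_lt.ne'
  obtain ⟨huw, hwv⟩ := hw
  rcases le_or_gt x u with hxu | hux
  · have hparts : ∀ t, u ≤ t → max (t - max x u) 0 = t - u ∧ max (min t x - u) 0 = 0 :=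
      fun t ht => ⟨by rw [max_eq_right hxu, max_eq_left (sub_nonneg.2 ht)],
       by rw [min_eq_right (hxu.trans ht), max_eq_right (sub_nonpos.2 hxu)]⟩
    simp only [huv, indicator_apply, (hparts w huw).1, (hparts w huw).2,
      (hparts v huv_lt.le).1, (hparts v huv_lt.le).2]
    split_ifs <;> field_simp <;> ring
  · have hvx : v ≤ x := not_lt.1 fun h => hx ⟨hux, h⟩
    have hparts :
        ∀ t, u ≤ t → t ≤ x → max (t - max x u) 0 = 0 ∧ max (min t x - u) 0 = t - u :=
      fun t ht htx => ⟨by rw [max_eq_left hux.le, max_eq_right (sub_nonpos.2 htx)],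
       by rw [min_eq_left htx, max_eq_left (sub_nonneg.2 ht)]⟩
    simp only [huv, indicator_apply, (hparts w huw (hwv.trans hvx)).1,
      (hparts w huw (hwv.trans hvx)).2, (hparts v huv_lt.le hvx).1, (hparts v huv_lt.le hvx).2]
    split_ifs <;> field_simp <;> ring

lemma integral_huv_eq_div_mul {x₀ u v w : ℝ} {ν : Measure ℝ} (huv_lt : u < v)
    (hν : ν (Ioo u v) = 0) (hw : w ∈ Icc u v) :
    ∫ x, huv x₀ u w x ∂ν = (w - u) / (v - u) * ∫ x, huv x₀ u v x ∂ν := by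
  rw [← integral_const_mul]
  exact integral_congr_ae <| (measure_eq_zero_iff_ae_notMem.1 hν).mono
    fun x hx => huv_eq_div_mul_huv huv_lt hw hx

lemma derivWithin_Ioi_eq_of_eqOn_Icc {f g : ℝ → ℝ} {a b g' : ℝ} (hab : a < b)
    (hfg : EqOn f g (Icc a b)) (hg : HasDerivAt g g' a) : derivWithin f (Ioi a) a = g' :=
  ((hg.hasDerivWithinAt.congr hfg (hfg (left_mem_Icc.2 hab.le))).mono_of_mem_nhdsWithin
    (Icc_mem_nhdsGT hab)).derivWithin (uniqueDiffWithinAt_Ioi a)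

lemma derivWithin_Iio_eq_of_eqOn_Icc {f g : ℝ → ℝ} {a b g' : ℝ} (hab : a < b)
    (hfg : EqOn f g (Icc a b)) (hg : HasDerivAt g g' b) : derivWithin f (Iio b) b = g' :=
  ((hg.hasDerivWithinAt.congr hfg (hfg (right_mem_Icc.2 hab.le))).mono_of_mem_nhdsWithin
    (Icc_mem_nhdsLT hab)).derivWithin (uniqueDiffWithinAt_Iio b)

lemma convexOn_univ_of_forall_convexOn_Ici {f : ℝ → ℝ} (hf : ∀ u, ConvexOn ℝ (Ici u) f) :
    ConvexOn ℝ univ f :=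
  ⟨convex_univ, fun a _ b _ _ _ ht hs hts =>
    (hf (min a b)).2 (min_le_left a b) (min_le_right a b) ht hs hts⟩

/-- if `φ(v) = φ(u) + ∫ h_u^v dν` for all `u ≤ v` for a nonnegative
countably additive Borel measure `ν`, then `φ` is convex; moreover `u < v` and
`ν((u,v)) = 0` imply `D⁻φ(v) ≤ D⁺φ(u)`. -/
theorem stmt12 (φ : ℝ → ℝ) (x₀ : ℝ) (ν : Measure ℝ)
    (hint : ∀ u v : ℝ, u ≤ v → Integrable (huv x₀ u v) ν)
    (hrep : ∀ u v : ℝ, u ≤ v → φ v = φ u + ∫ x, huv x₀ u v x ∂ν) :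
    ConvexOn ℝ Set.univ φ ∧
      ∀ u v : ℝ, u < v → ν (Set.Ioo u v) = 0 →
        derivWithin φ (Set.Iio v) v ≤ derivWithin φ (Set.Ioi u) u := by
  refine ⟨convexOn_univ_of_forall_convexOn_Ici fun u => ?_, fun u v huv_lt hν => ?_⟩
  · have hconv :=
      (ConvexOn.integral (convexOn_huv x₀ u) (hint u) (convex_Ici u)).add_const (φ u)
    exact hconv.congr fun v hv => by simp [hrep u v hv, add_comm]
  · set g : ℝ → ℝ := fun w => φ u + slope φ u v * (w - u)
    have haffine : EqOn φ g (Icc u v) := fun w hw => by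
      rw [hrep u w hw.1, integral_huv_eq_div_mul huv_lt hν hw,
        ← sub_eq_iff_eq_add'.2 (hrep u v huv_lt.le)]
      simp only [g, slope_def_field]
      ring
    have hg : ∀ y, HasDerivAt g (slope φ u v) y := fun y => by
      simpa [g] using ((hasDerivAt_id y).sub_const u).const_mul (slope φ u v) |>.const_add (φ u)
    rw [derivWithin_Iio_eq_of_eqOn_Icc huv_lt haffine (hg v),
      derivWithin_Ioi_eq_of_eqOn_Icc huv_lt haffine (hg u)]
end

section
/- Let S be a separable topological space, S₀ a countable dense subset, and H : (0,1) → S the Borel function H = ι ∘ G onto S₀ as above. Let U : Ω → ℝ be any function whose range has closure equal to [0,1], and set X' = H ∘ U. Then for every continuous h : S → ℝ with inf-negativity witness, i.e. whenever {h < 0} is a nonempty open subset of S, there exists ω ∈ Ω with h(X'(ω)) < 0. -/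
/-- `G(x) = min {n ∈ ℕ : 1 − 2⁻ⁿ ≥ x}`. -/
noncomputable def Gfun (x : ℝ) : ℕ := sInf {n : ℕ | x ≤ 1 - (2 : ℝ) ^ (-(n : ℤ))}

open Set

lemma Gfun_eq_of_mem_Ioc {n : ℕ} {x : ℝ}
    (hx : x ∈ Ioc (1 - (2 : ℝ) ^ (-(n : ℤ) + 1)) (1 - (2 : ℝ) ^ (-(n : ℤ)))) : Gfun x = n := by
  have hn : n ∈ {m : ℕ | x ≤ 1 - (2 : ℝ) ^ (-(m : ℤ))} := hx.2
  refine le_antisymm (Nat.sInf_le hn) (le_csInf ⟨n, hn⟩ fun m (hm : x ≤ _) => ?_)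
  by_contra! hmn
  have : (2 : ℝ) ^ (-(n : ℤ) + 1) ≤ 2 ^ (-(m : ℤ)) := zpow_le_zpow_right₀ one_le_two (by omega)
  linarith [hx.1]

lemma Ioo_subset_Icc_zero_one_of_one_le {n : ℕ} (hn : 1 ≤ n) :
    Ioo (1 - (2 : ℝ) ^ (-(n : ℤ) + 1)) (1 - (2 : ℝ) ^ (-(n : ℤ))) ⊆ Icc 0 1 := by
  have hle : (2 : ℝ) ^ (-(n : ℤ) + 1) ≤ 1 := zpow_le_one_of_nonpos₀ one_le_two (by omega)
  have hpos : (0 : ℝ) < 2 ^ (-(n : ℤ)) := by positivity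
  exact fun x hx => ⟨by linarith [hx.1], by linarith [hx.2]⟩

/-- `G ∘ U` takes every value `n ≥ 1`, because `G` is constant equal to `n` on the nonempty
open interval `(1 - 2^(1-n), 1 - 2^(-n))`, which lies in `[0,1] = closure (range U)`. -/
lemma exists_Gfun_comp_eq {Ω : Type*} {U : Ω → ℝ}
    (hU : closure (range U) = Icc (0 : ℝ) 1) {n : ℕ} (hn : 1 ≤ n) : ∃ ω, Gfun (U ω) = n := by
  set I := Ioo (1 - (2 : ℝ) ^ (-(n : ℤ) + 1)) (1 - (2 : ℝ) ^ (-(n : ℤ)))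
  have hI : I.Nonempty := nonempty_Ioo.2 <| by
    linarith [zpow_lt_zpow_right₀ one_lt_two (lt_add_one (-(n : ℤ))) (a := (2 : ℝ))]
  have hclosure : (closure (range U) ∩ I).Nonempty := by
    rwa [hU, inter_eq_right.2 (Ioo_subset_Icc_zero_one_of_one_le hn)]
  obtain ⟨_, ⟨ω, rfl⟩, hω⟩ := (closure_inter_open_nonempty_iff isOpen_Ioo).1 hclosure
  exact ⟨ω, Gfun_eq_of_mem_Ioc (Ioo_subset_Ioc_self hω)⟩

/-- with `S₀ = ι[{n ≥ 1}]` dense in `S`, `H = ι ∘ G`, and `U : Ω → ℝ`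
whose range has closure `[0,1]`, the composition `X' = H ∘ U` satisfies the
conglomerability property: whenever `{h < 0}` is open (h continuous) and nonempty,
some `ω` has `h(X'(ω)) < 0`. -/
theorem stmt14 {S : Type*} [TopologicalSpace S] (ι : ℕ → S)
    (hdense : Dense (ι '' {n : ℕ | 1 ≤ n}))
    {Ω : Type*} (U : Ω → ℝ) (hU : closure (Set.range U) = Set.Icc (0 : ℝ) 1) :
    ∀ h : S → ℝ, Continuous h → (∃ s, h s < 0) →
      ∃ ω : Ω, h (ι (Gfun (U ω))) < 0 := by
  intro h hc ⟨s, hs⟩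
  obtain ⟨_, ⟨n, hn, rfl⟩, hneg⟩ :=
    hdense.exists_mem_open (isOpen_lt hc continuous_const) ⟨s, hs⟩
  obtain ⟨ω, hω⟩ := exists_Gfun_comp_eq hU hn
  exact ⟨ω, hω ▸ hneg⟩
end

section
/- Let R₀ be a family of subsets of Ω containing the empty set and closed under finite intersections, and let λ₀ be a finitely additive set function on R₀ that is strongly additive: λ₀(H₁) + λ₀(H₂) = λ₀(H₁ ∪ H₂) + λ₀(H₁ ∩ H₂) whenever H₁, H₂, H₁ ∪ H₂, H₁ ∩ H₂ ∈ R₀. If R₀ is also closed under finite unions, then λ₀ extends uniquely to a nonnegative finitely additive set function λ₁ on the ring generated by R₀, provided λ₀ is monotone on R₀. -/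
/-!
A monotone modular `m` on a lattice `L` induces the linear functional
`∑ cᵢ 𝟙_{Aᵢ} ↦ ∑ cᵢ m(Aᵢ)` on the span of the indicators of sets of `L`. Since `L` is closed
under intersections this span is closed under products, so it contains the indicator of every
set of the generated ring, and the extension is the functional evaluated at indicators.

Both well-definedness and nonnegativity come from positivity: `∑ cᵢ 𝟙_{Aᵢ} ≥ 0` forces
`∑ cᵢ m(Aᵢ) ≥ 0`. This is proved by induction on the number of sets, for the masses
`m (X ∩ W ∪ Z) - m Z` relative to a window `W \ Z`: cutting the window at `M = A ∩ W ∪ Z`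
splits each relative mass into two by modularity, and on each half `𝟙_A` is constant.

For uniqueness, a nonnegative additive function on the generated ring is itself monotone and
modular there, so it also factors through the same functional.
-/

open MeasureTheory

section

variable {Ω ι : Type*}

structure IsSetLattice (L : Set (Set Ω)) : Prop where
  empty_mem : ∅ ∈ L
  union_mem ⦃A B : Set Ω⦄ : A ∈ L → B ∈ L → A ∪ B ∈ L
  inter_mem ⦃A B : Set Ω⦄ : A ∈ L → B ∈ L → A ∩ B ∈ L

structure IsMonotoneValuation (L : Set (Set Ω)) (m : Set Ω → ℝ) : Prop where
  map_empty : m ∅ = 0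
  mono ⦃A B : Set Ω⦄ : A ∈ L → B ∈ L → A ⊆ B → m A ≤ m B
  modular ⦃A B : Set Ω⦄ : A ∈ L → B ∈ L → m A + m B = m (A ∪ B) + m (A ∩ B)

lemma MeasureTheory.IsSetRing.isSetLattice {R : Set (Set Ω)} (hR : IsSetRing R) :
    IsSetLattice R :=
  ⟨hR.empty_mem, hR.union_mem, fun _ _ => hR.inter_mem⟩

lemma MeasureTheory.IsSetRing.isMonotoneValuation {R : Set (Set Ω)} {μ : Set Ω → ℝ}
    (hR : IsSetRing R) (hμ : ∀ A ∈ R, 0 ≤ μ A)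
    (hadd : ∀ A ∈ R, ∀ B ∈ R, Disjoint A B → μ (A ∪ B) = μ A + μ B) :
    IsMonotoneValuation R μ where
  map_empty := by
    have := hadd ∅ hR.empty_mem ∅ hR.empty_mem (disjoint_bot_left)
    rw [Set.union_empty] at this
    linarith
  mono A B hA hB hAB := by
    have := hadd A hA (B \ A) (hR.sdiff_mem hB hA) Set.disjoint_sdiff_right
    rw [Set.union_sdiff_cancel hAB] at this
    linarith [hμ _ (hR.sdiff_mem hB hA)]
  modular A B hA hB := by
    have hunion := hadd A hA (B \ A) (hR.sdiff_mem hB hA) Set.disjoint_sdiff_right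
    have hsplit := hadd (B \ A) (hR.sdiff_mem hB hA) (B ∩ A) (hR.inter_mem hB hA)
      Set.disjoint_sdiff_inter
    rw [Set.union_sdiff_self] at hunion
    rw [Set.sdiff_union_inter, Set.inter_comm] at hsplit
    linarith

noncomputable def indicatorCombination : (Set Ω →₀ ℝ) →ₗ[ℝ] Ω → ℝ :=
  Finsupp.linearCombination ℝ fun A => A.indicator 1

lemma indicatorCombination_apply (f : Set Ω →₀ ℝ) (x : Ω) :
    indicatorCombination f x = ∑ A ∈ f.support, f A * A.indicator 1 x := by
  simp [indicatorCombination, Finsupp.linearCombination_apply, Finsupp.sum]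

def generatedSetRing (L : Set (Set Ω)) : Set (Set Ω) :=
  ⋂₀ {R | IsSetRing R ∧ L ⊆ R}

lemma isSetRing_generatedSetRing (L : Set (Set Ω)) : IsSetRing (generatedSetRing L) where
  empty_mem := Set.mem_sInter.2 fun _ hR => hR.1.empty_mem
  union_mem _ _ hA hB := Set.mem_sInter.2 fun R hR => hR.1.union_mem (hA R hR) (hB R hR)
  sdiff_mem _ _ hA hB := Set.mem_sInter.2 fun R hR => hR.1.sdiff_mem (hA R hR) (hB R hR)

lemma subset_generatedSetRing (L : Set (Set Ω)) : L ⊆ generatedSetRing L :=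
  fun _ hA _ hR => hR.2 hA

lemma generatedSetRing_subset {L R : Set (Set Ω)} (hR : IsSetRing R) (hLR : L ⊆ R) :
    generatedSetRing L ⊆ R :=
  Set.sInter_subset_of_mem ⟨hR, hLR⟩

open scoped Pointwise in
lemma isSetRing_setOf_indicator_mem_span {L : Set (Set Ω)} (hL : InfClosed L) :
    IsSetRing {S : Set Ω |
      S.indicator 1 ∈ Submodule.span ℝ ((fun A : Set Ω => A.indicator (1 : Ω → ℝ)) '' L)} := by
  set I := (fun A : Set Ω => A.indicator (1 : Ω → ℝ)) '' L
  set P := Submodule.span ℝ I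
  have hmul {f g : Ω → ℝ} (hf : f ∈ P) (hg : g ∈ P) : f * g ∈ P := by
    have hfg : f * g ∈ Submodule.span ℝ (I * I) :=
      Submodule.span_mul_span ℝ I I ▸ Submodule.mul_mem_mul hf hg
    refine Submodule.span_mono ?_ hfg
    rintro _ ⟨_, ⟨A, hA, rfl⟩, _, ⟨B, hB, rfl⟩, rfl⟩
    exact ⟨A ∩ B, hL hA hB, Set.inter_indicator_one⟩
  refine ⟨?_, fun S T hS hT => ?_, fun S T hS hT => ?_⟩
  · change (∅ : Set Ω).indicator 1 ∈ P
    rw [Set.indicator_empty']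
    exact zero_mem P
  · have h := Set.indicator_union_add_inter (1 : Ω → ℝ) S T
    rw [Set.inter_indicator_one, ← eq_sub_iff_add_eq] at h
    rw [Set.mem_ofPred_eq, h]
    exact sub_mem (add_mem hS hT) (hmul hS hT)
  · rw [Set.mem_ofPred_eq, ← Set.sdiff_self_inter, Set.indicator_sdiff Set.inter_subset_left,
      Set.inter_indicator_one]
    exact sub_mem hS (hmul hS hT)

lemma exists_indicatorCombination_eq {L : Set (Set Ω)} (hL : InfClosed L) {S : Set Ω}
    (hS : S ∈ generatedSetRing L) :
    ∃ f ∈ Finsupp.supported ℝ ℝ L, indicatorCombination f = S.indicator 1 :=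
  (Finsupp.mem_span_image_iff_linearCombination ℝ).1 <|
    generatedSetRing_subset (isSetRing_setOf_indicator_mem_span hL)
      (fun _ hA => Submodule.subset_span ⟨_, hA, rfl⟩) hS

open Classical in
noncomputable def extendToRing (L : Set (Set Ω)) (m : Set Ω → ℝ) (S : Set Ω) : ℝ :=
  if h : ∃ f ∈ Finsupp.supported ℝ ℝ L, indicatorCombination f = S.indicator 1 then
    Finsupp.linearCombination ℝ m h.choose
  else 0

namespace IsMonotoneValuation

variable {L : Set (Set Ω)} {m : Set Ω → ℝ}

lemma modular_relative (hL : IsSetLattice L) (hm : IsMonotoneValuation L m)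
    {X Y Z W : Set Ω} (hX : X ∈ L) (hY : Y ∈ L) (hZ : Z ∈ L) (hW : W ∈ L) :
    m (X ∩ W ∪ Z) - m Z =
      (m (X ∩ (Y ∩ W ∪ Z) ∪ Z) - m Z) + (m (X ∩ W ∪ (Y ∩ W ∪ Z)) - m (Y ∩ W ∪ Z)) := by
  have h := hm.modular (hL.union_mem (hL.inter_mem hX hW) hZ)
    (hL.union_mem (hL.inter_mem hY hW) hZ)
  have hunion : X ∩ W ∪ Z ∪ (Y ∩ W ∪ Z) = X ∩ W ∪ (Y ∩ W ∪ Z) := by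
    ext; simp only [Set.mem_union, Set.mem_inter_iff]; tauto
  have hinter : (X ∩ W ∪ Z) ∩ (Y ∩ W ∪ Z) = X ∩ (Y ∩ W ∪ Z) ∪ Z := by
    ext; simp only [Set.mem_union, Set.mem_inter_iff]; tauto
  rw [hunion, hinter] at h
  linarith

theorem sum_relative_nonneg (hL : IsSetLattice L) (hm : IsMonotoneValuation L m) (c : ι → ℝ)
    {A : ι → Set Ω} {s : Finset ι} (hA : ∀ i ∈ s, A i ∈ L) {Z W : Set Ω} (hZ : Z ∈ L)
    (hW : W ∈ L) (d : ℝ) (h : ∀ x ∈ W \ Z, 0 ≤ d + ∑ i ∈ s, c i * (A i).indicator 1 x) :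
    0 ≤ d * (m (W ∪ Z) - m Z) + ∑ i ∈ s, c i * (m (A i ∩ W ∪ Z) - m Z) := by
  classical
  induction s using Finset.induction_on generalizing Z W d with
  | empty =>
    simp only [Finset.sum_empty, add_zero] at h ⊢
    by_cases hWZ : W ⊆ Z
    · simp [Set.union_eq_right.2 hWZ]
    · obtain ⟨x, hxW, hxZ⟩ := Set.not_subset.1 hWZ
      exact mul_nonneg (h x ⟨hxW, hxZ⟩)
        (sub_nonneg.2 (hm.mono hZ (hL.union_mem hW hZ) Set.subset_union_right))
  | insert a s ha ih =>
    have hAa : A a ∈ L := hA a (Finset.mem_insert_self a s)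
    have hAs : ∀ i ∈ s, A i ∈ L := fun i hi => hA i (Finset.mem_insert_of_mem hi)
    set M := A a ∩ W ∪ Z with hM_def
    have hM : M ∈ L := hL.union_mem (hL.inter_mem hAa hW) hZ
    have lower := ih hAs hZ hM (d + c a) fun x ⟨hxM, hxZ⟩ => by
      obtain ⟨hxA, hxW⟩ := hxM.resolve_right hxZ
      have := h x ⟨hxW, hxZ⟩
      rwa [Finset.sum_insert ha, Set.indicator_of_mem hxA, Pi.one_apply, mul_one,
        ← add_assoc] at this
    have upper := ih hAs hM hW d fun x ⟨hxW, hxM⟩ => by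
      have hxA : x ∉ A a := fun hxA => hxM (Or.inl ⟨hxA, hxW⟩)
      have := h x ⟨hxW, fun hxZ => hxM (Or.inr hxZ)⟩
      rwa [Finset.sum_insert ha, Set.indicator_of_notMem hxA, mul_zero, zero_add] at this
    have hMZ : M ∪ Z = M := Set.union_eq_left.2 Set.subset_union_right
    have hWM : W ∪ M = W ∪ Z := by
      rw [hM_def, ← Set.union_assoc, Set.union_eq_left.2 Set.inter_subset_right]
    have hsplit : ∑ i ∈ s, c i * (m (A i ∩ W ∪ Z) - m Z) =
        ∑ i ∈ s, c i * (m (A i ∩ M ∪ Z) - m Z) + ∑ i ∈ s, c i * (m (A i ∩ W ∪ M) - m M) := by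
      rw [← Finset.sum_add_distrib]
      refine Finset.sum_congr rfl fun i hi => ?_
      rw [← mul_add, modular_relative hL hm (hAs i hi) hAa hZ hW]
    rw [hMZ] at lower
    rw [hWM] at upper
    rw [Finset.sum_insert ha, hsplit]
    linarith

theorem sum_mul_nonneg (hL : IsSetLattice L) (hm : IsMonotoneValuation L m) (c : ι → ℝ)
    {A : ι → Set Ω} {s : Finset ι} (hA : ∀ i ∈ s, A i ∈ L)
    (h : ∀ x, 0 ≤ ∑ i ∈ s, c i * (A i).indicator 1 x) :
    0 ≤ ∑ i ∈ s, c i * m (A i) := by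
  have hW : s.sup A ∈ L :=
    Finset.sup_induction hL.empty_mem (fun _ h₁ _ h₂ => hL.union_mem h₁ h₂) hA
  have key := hm.sum_relative_nonneg hL c hA hL.empty_mem hW 0 fun x _ => by simpa using h x
  rw [zero_mul, zero_add] at key
  convert key using 2 with i hi
  rw [Set.union_empty, Set.inter_eq_left.2 (Finset.le_sup (f := A) hi), hm.map_empty, sub_zero]

theorem linearCombination_nonneg (hL : IsSetLattice L) (hm : IsMonotoneValuation L m)
    {f : Set Ω →₀ ℝ} (hf : f ∈ Finsupp.supported ℝ ℝ L) (h : 0 ≤ indicatorCombination f) :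
    0 ≤ Finsupp.linearCombination ℝ m f := by
  rw [Finsupp.linearCombination_apply, Finsupp.sum]
  exact hm.sum_mul_nonneg hL f (fun A hA => hf hA) fun x => by
    simpa [indicatorCombination_apply] using h x

theorem linearCombination_eq (hL : IsSetLattice L) (hm : IsMonotoneValuation L m)
    {f g : Set Ω →₀ ℝ} (hf : f ∈ Finsupp.supported ℝ ℝ L) (hg : g ∈ Finsupp.supported ℝ ℝ L)
    (h : indicatorCombination f = indicatorCombination g) :
    Finsupp.linearCombination ℝ m f = Finsupp.linearCombination ℝ m g := by
  have hfg := hm.linearCombination_nonneg hL (sub_mem hf hg) (by simp [h])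
  have hgf := hm.linearCombination_nonneg hL (sub_mem hg hf) (by simp [h])
  rw [map_sub, sub_nonneg] at hfg hgf
  exact le_antisymm hgf hfg

lemma extendToRing_eq (hL : IsSetLattice L) (hm : IsMonotoneValuation L m) {S : Set Ω}
    {f : Set Ω →₀ ℝ} (hf : f ∈ Finsupp.supported ℝ ℝ L)
    (hfS : indicatorCombination f = S.indicator 1) :
    extendToRing L m S = Finsupp.linearCombination ℝ m f := by
  have h : ∃ f ∈ Finsupp.supported ℝ ℝ L, indicatorCombination f = S.indicator 1 := ⟨f, hf, hfS⟩
  rw [extendToRing, dif_pos h]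
  exact hm.linearCombination_eq hL h.choose_spec.1 hf (h.choose_spec.2.trans hfS.symm)

lemma extendToRing_of_mem (hL : IsSetLattice L) (hm : IsMonotoneValuation L m) {A : Set Ω}
    (hA : A ∈ L) : extendToRing L m A = m A := by
  rw [hm.extendToRing_eq hL (Finsupp.single_mem_supported ℝ 1 hA)
    (by simp [indicatorCombination])]
  simp

lemma extendToRing_nonneg (hL : IsSetLattice L) (hm : IsMonotoneValuation L m) {S : Set Ω}
    (hS : S ∈ generatedSetRing L) : 0 ≤ extendToRing L m S := by
  obtain ⟨f, hf, hfS⟩ := exists_indicatorCombination_eq (fun _ hA _ hB => hL.inter_mem hA hB) hS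
  rw [hm.extendToRing_eq hL hf hfS]
  exact hm.linearCombination_nonneg hL hf (hfS ▸ Set.indicator_nonneg fun _ _ => zero_le_one)

lemma extendToRing_union (hL : IsSetLattice L) (hm : IsMonotoneValuation L m) {S T : Set Ω}
    (hS : S ∈ generatedSetRing L) (hT : T ∈ generatedSetRing L) (hST : Disjoint S T) :
    extendToRing L m (S ∪ T) = extendToRing L m S + extendToRing L m T := by
  obtain ⟨f, hf, hfS⟩ := exists_indicatorCombination_eq (fun _ hA _ hB => hL.inter_mem hA hB) hS
  obtain ⟨g, hg, hgT⟩ := exists_indicatorCombination_eq (fun _ hA _ hB => hL.inter_mem hA hB) hT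
  rw [hm.extendToRing_eq hL (add_mem hf hg)
      (by rw [map_add, hfS, hgT, Set.indicator_union_of_disjoint hST]; rfl),
    map_add, hm.extendToRing_eq hL hf hfS, hm.extendToRing_eq hL hg hgT]

lemma eq_extendToRing (hL : IsSetLattice L) (hm : IsMonotoneValuation L m) {μ : Set Ω → ℝ}
    (hμ : ∀ A ∈ generatedSetRing L, 0 ≤ μ A)
    (hadd : ∀ A ∈ generatedSetRing L, ∀ B ∈ generatedSetRing L,
      Disjoint A B → μ (A ∪ B) = μ A + μ B)
    (hμm : ∀ A ∈ L, μ A = m A) {S : Set Ω} (hS : S ∈ generatedSetRing L) :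
    μ S = extendToRing L m S := by
  obtain ⟨f, hf, hfS⟩ := exists_indicatorCombination_eq (fun _ hA _ hB => hL.inter_mem hA hB) hS
  have hR := isSetRing_generatedSetRing L
  calc μ S = Finsupp.linearCombination ℝ μ (Finsupp.single S 1) := by simp
    _ = Finsupp.linearCombination ℝ μ f :=
      (hR.isMonotoneValuation hμ hadd).linearCombination_eq hR.isSetLattice
        (Finsupp.single_mem_supported ℝ 1 hS)
        (Finsupp.supported_mono (subset_generatedSetRing L) hf)
        (by rw [hfS]; simp [indicatorCombination])
    _ = Finsupp.linearCombination ℝ m f := by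
      simp only [Finsupp.linearCombination_apply]
      exact Finsupp.sum_congr fun A hA => by rw [hμm A (hf hA)]
    _ = extendToRing L m S := (hm.extendToRing_eq hL hf hfS).symm

end IsMonotoneValuation

end

/-- a monotone, modular (strongly additive) set function `λ₀`, vanishing
at `∅`, on a lattice of sets `R₀` extends uniquely to a nonnegative finitely additive
set function on the ring generated by `R₀`. -/
theorem stmt18 {Ω : Type*} (R₀ : Set (Set Ω)) (l₀ : Set Ω → ℝ)
    (hempty : ∅ ∈ R₀)
    (hinter : ∀ A ∈ R₀, ∀ B ∈ R₀, A ∩ B ∈ R₀)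
    (hunion : ∀ A ∈ R₀, ∀ B ∈ R₀, A ∪ B ∈ R₀)
    (hzero : l₀ ∅ = 0)
    (hmono : ∀ A ∈ R₀, ∀ B ∈ R₀, A ⊆ B → l₀ A ≤ l₀ B)
    (hmodular : ∀ A ∈ R₀, ∀ B ∈ R₀, l₀ A + l₀ B = l₀ (A ∪ B) + l₀ (A ∩ B)) :
    ∃ l₁ : Set Ω → ℝ,
      (∀ A ∈ ⋂₀ {𝒞 : Set (Set Ω) | MeasureTheory.IsSetRing 𝒞 ∧ R₀ ⊆ 𝒞}, 0 ≤ l₁ A) ∧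
      (∀ A ∈ ⋂₀ {𝒞 : Set (Set Ω) | MeasureTheory.IsSetRing 𝒞 ∧ R₀ ⊆ 𝒞},
        ∀ B ∈ ⋂₀ {𝒞 : Set (Set Ω) | MeasureTheory.IsSetRing 𝒞 ∧ R₀ ⊆ 𝒞},
          Disjoint A B → l₁ (A ∪ B) = l₁ A + l₁ B) ∧
      (∀ A ∈ R₀, l₁ A = l₀ A) ∧
      ∀ l₂ : Set Ω → ℝ,
        ((∀ A ∈ ⋂₀ {𝒞 : Set (Set Ω) | MeasureTheory.IsSetRing 𝒞 ∧ R₀ ⊆ 𝒞}, 0 ≤ l₂ A) ∧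
         (∀ A ∈ ⋂₀ {𝒞 : Set (Set Ω) | MeasureTheory.IsSetRing 𝒞 ∧ R₀ ⊆ 𝒞},
           ∀ B ∈ ⋂₀ {𝒞 : Set (Set Ω) | MeasureTheory.IsSetRing 𝒞 ∧ R₀ ⊆ 𝒞},
             Disjoint A B → l₂ (A ∪ B) = l₂ A + l₂ B) ∧
         (∀ A ∈ R₀, l₂ A = l₀ A)) →
        ∀ A ∈ ⋂₀ {𝒞 : Set (Set Ω) | MeasureTheory.IsSetRing 𝒞 ∧ R₀ ⊆ 𝒞}, l₂ A = l₁ A := by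
  have hL : IsSetLattice R₀ :=
    ⟨hempty, fun A B hA hB => hunion A hA B hB, fun A B hA hB => hinter A hA B hB⟩
  have hm : IsMonotoneValuation R₀ l₀ :=
    ⟨hzero, fun A B hA hB => hmono A hA B hB, fun A B hA hB => hmodular A hA B hB⟩
  exact ⟨extendToRing R₀ l₀, fun _ hS => hm.extendToRing_nonneg hL hS,
    fun _ hS _ hT hST => hm.extendToRing_union hL hS hT hST,
    fun _ hA => hm.extendToRing_of_mem hL hA,
    fun _ ⟨hμ, hadd, hμm⟩ _ hS => hm.eq_extendToRing hL hμ hadd hμm hS⟩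
end
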